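/- arXiv:1108.0295 — 6 statements merged into one kernel-verified Lean document; each statement's English description precedes it below -/
import Mathlib

section
/- Let (Φ_t)_{t≥0} be non-negative real random variables with Φ_0 ≤ Φ_max almost surely for some Φ_max ≥ 1, such that E[Φ_{t+1} | history] ≤ (1 - 1/ν)Φ_t for a constant ν > 1, and such that whenever Φ_t > 0 we have Φ_t ≥ 1. Let T = min{t : Φ_t = 0}. Then for every λ > 0, Pr(T > ⌈ν(ln Φ_max + λ)⌉) ≤ exp(-λ). -/
open MeasureTheory

/-- Tail bound of the multiplicative drift theorem: if the process takes values in
`{0} ∪ [1,∞)`, starts below `Φmax` and has multiplicative drift `(1 - 1/ν)`, then for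
every `λ > 0` the probability that the hitting time of `0` exceeds
`⌈ν (ln Φmax + λ)⌉` is at most `exp(-λ)`. -/
theorem stmt3 {Ω : Type*} {m : MeasurableSpace Ω} (μ : Measure Ω) [IsProbabilityMeasure μ]
    (ℱ : Filtration ℕ m) (Φ : ℕ → Ω → ℝ) (ν Φmax : ℝ) (hν : 1 < ν) (hΦmax : 1 ≤ Φmax)
    (hadapted : Adapted ℱ Φ) (hint : ∀ t, Integrable (Φ t) μ)
    (hval : ∀ t, ∀ᵐ ω ∂μ, Φ t ω = 0 ∨ 1 ≤ Φ t ω)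
    (h0 : ∀ᵐ ω ∂μ, Φ 0 ω ≤ Φmax)
    (hdrift : ∀ t, μ[Φ (t + 1) | ℱ t] ≤ᵐ[μ] fun ω => (1 - 1 / ν) * Φ t ω)
    (lam : ℝ) (hlam : 0 < lam) :
    μ {ω | ∀ t ≤ ⌈ν * (Real.log Φmax + lam)⌉₊, Φ t ω ≠ 0} ≤
      ENNReal.ofReal (Real.exp (-lam)) := by
  set N := ⌈ν * (Real.log Φmax + lam)⌉₊ with hN
  have hν0 : (0:ℝ) < ν := lt_trans one_pos hν
  have hΦmax0 : (0:ℝ) < Φmax := lt_of_lt_of_le one_pos hΦmax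
  have hc0 : (0:ℝ) ≤ 1 - 1/ν := by
    have : 1/ν ≤ 1 := by rw [div_le_one hν0]; exact hν.le
    linarith
  -- E[Φ t] ≤ (1-1/ν)^t * Φmax
  have key : ∀ t, ∫ ω, Φ t ω ∂μ ≤ (1 - 1/ν)^t * Φmax := by
    intro t
    induction t with
    | zero =>
      simp only [pow_zero, one_mul]
      calc ∫ ω, Φ 0 ω ∂μ ≤ ∫ _ω, Φmax ∂μ := integral_mono_ae (hint 0) (integrable_const _) h0
        _ = Φmax := by simp
    | succ t ih =>
      have h1 : ∫ ω, Φ (t+1) ω ∂μ = ∫ ω, (μ[Φ (t+1) | ℱ t]) ω ∂μ :=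
        (integral_condExp (ℱ.le t)).symm
      have h2 : ∫ ω, (μ[Φ (t+1) | ℱ t]) ω ∂μ ≤ ∫ ω, (1 - 1/ν) * Φ t ω ∂μ :=
        integral_mono_ae integrable_condExp ((hint t).const_mul _) (hdrift t)
      have h3 : ∫ ω, (1 - 1/ν) * Φ t ω ∂μ = (1 - 1/ν) * ∫ ω, Φ t ω ∂μ :=
        integral_const_mul _ _
      calc ∫ ω, Φ (t+1) ω ∂μ ≤ (1 - 1/ν) * ∫ ω, Φ t ω ∂μ := by
            rw [h1]; rw [h3] at h2; exact h2
        _ ≤ (1 - 1/ν) * ((1 - 1/ν)^t * Φmax) := mul_le_mul_of_nonneg_left ih hc0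
        _ = (1 - 1/ν)^(t+1) * Φmax := by ring
  -- event a.e. subset of {1 ≤ Φ N}
  have hsub : μ {ω | ∀ t ≤ N, Φ t ω ≠ 0} ≤ μ {ω | 1 ≤ Φ N ω} := by
    refine measure_mono_ae ?_
    filter_upwards [hval N] with ω hω hmem
    rcases hω with h | h
    · exact absurd h (hmem N le_rfl)
    · exact h
  -- Markov
  have hnn : 0 ≤ᵐ[μ] Φ N := by
    filter_upwards [hval N] with ω hω
    show (0:ℝ) ≤ Φ N ω
    rcases hω with h | h
    · simp [h]
    · linarith
  have markov := mul_meas_ge_le_integral_of_nonneg hnn (hint N) 1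
  rw [one_mul] at markov
  have hmeas_ne_top : μ {ω | 1 ≤ Φ N ω} ≠ ⊤ := measure_ne_top μ _
  -- final numeric bound
  have hbound : (1 - 1/ν)^N * Φmax ≤ Real.exp (-lam) := by
    have h1 : (1 - 1/ν)^N ≤ Real.exp (-(1/ν))^N :=
      pow_le_pow_left₀ hc0 (by linarith [Real.add_one_le_exp (-(1/ν))]) N
    have h2 : Real.exp (-(1/ν))^N = Real.exp (-(N/ν)) := by
      rw [← Real.exp_nat_mul]; congr 1; field_simp
    have hNge : ν * (Real.log Φmax + lam) ≤ (N:ℝ) := Nat.le_ceil _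
    have h3 : Real.log Φmax + lam ≤ (N:ℝ)/ν := by
      rw [le_div_iff₀ hν0]; linarith [hNge]
    have h4 : Real.exp (-((N:ℝ)/ν)) ≤ Real.exp (-(Real.log Φmax + lam)) :=
      Real.exp_le_exp.mpr (by linarith)
    have h5 : Real.exp (-(Real.log Φmax + lam)) * Φmax = Real.exp (-lam) := by
      rw [neg_add, Real.exp_add, Real.exp_neg, Real.exp_log hΦmax0]
      field_simp
    calc (1 - 1/ν)^N * Φmax ≤ Real.exp (-((N:ℝ)/ν)) * Φmax := by
          apply mul_le_mul_of_nonneg_right _ hΦmax0.le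
          rw [← h2]; exact h1
      _ ≤ Real.exp (-(Real.log Φmax + lam)) * Φmax := mul_le_mul_of_nonneg_right h4 hΦmax0.le
      _ = Real.exp (-lam) := h5
  calc μ {ω | ∀ t ≤ N, Φ t ω ≠ 0} ≤ μ {ω | 1 ≤ Φ N ω} := hsub
    _ = ENNReal.ofReal ((μ {ω | 1 ≤ Φ N ω}).toReal) := (ENNReal.ofReal_toReal hmeas_ne_top).symm
    _ ≤ ENNReal.ofReal (Real.exp (-lam)) := by
        apply ENNReal.ofReal_le_ofReal
        exact le_trans markov (le_trans (key N) hbound)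
end

section
/- Let (Φ_t)_{t≥0} be non-negative real random variables with Φ_0 ≤ Φ_max almost surely for some Φ_max ≥ 1, such that E[Φ_{t+1} | history] ≤ (1 - 1/ν)Φ_t for a constant ν > 1, and such that whenever Φ_t > 0 we have Φ_t ≥ 1. Let T = min{t : Φ_t = 0}. Then E[T] ≤ ν(ln Φ_max + 1). -/
open MeasureTheory Finset

lemma drift_sum_bound {ν C : ℝ} (hν : 1 < ν) (hC : 1 ≤ C) (n : ℕ) :
    ∑ t ∈ Finset.range n, min 1 (C * (1 - 1/ν) ^ t) ≤ ν * (Real.log C + 1) := by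
  have hν0 : 0 < ν := lt_trans one_pos hν
  set r : ℝ := 1 - 1/ν with hr
  have hr0 : 0 < r := by
    have h1 : 1/ν < 1 := by rw [div_lt_one hν0]; exact hν
    rw [hr]; linarith
  have hr1 : r < 1 := by
    have : 0 < 1/ν := by positivity
    simp only [hr]; linarith
  set L : ℝ := ν * Real.log C with hL
  have hL0 : 0 ≤ L := mul_nonneg hν0.le (Real.log_nonneg hC)
  set k : ℕ := ⌈L⌉₊ with hk
  have hkL : L ≤ k := Nat.le_ceil L
  have hkL1 : (k : ℝ) ≤ L + 1 := by
    have := Nat.ceil_lt_add_one hL0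
    linarith
  set ε : ℝ := (k : ℝ) - L with hε
  have hε0 : 0 ≤ ε := by simp [hε]; linarith
  have hε1 : ε ≤ 1 := by simp [hε]; linarith
  -- bound each term
  have key : ∀ m : ℕ, ∑ t ∈ Finset.range m, min 1 (C * r ^ t) ≤ (k : ℝ) + ν * (C * r ^ k) := by
    intro m
    rcases le_or_gt m k with hmk | hkm
    · calc ∑ t ∈ Finset.range m, min 1 (C * r ^ t) ≤ ∑ t ∈ Finset.range m, 1 := by
            apply Finset.sum_le_sum; intro i _; exact min_le_left _ _
        _ = (m : ℝ) := by simp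
        _ ≤ (k : ℝ) := by exact_mod_cast hmk
        _ ≤ (k : ℝ) + ν * (C * r ^ k) := by
            have : 0 ≤ ν * (C * r ^ k) := by positivity
            linarith
    · rw [← Finset.sum_range_add_sum_Ico _ hkm.le]
      have h1 : ∑ t ∈ Finset.range k, min 1 (C * r ^ t) ≤ (k : ℝ) := by
        calc _ ≤ ∑ t ∈ Finset.range k, (1:ℝ) :=
            Finset.sum_le_sum fun i _ => min_le_left _ _
          _ = (k : ℝ) := by simp
      have h2 : ∑ t ∈ Finset.Ico k m, min 1 (C * r ^ t) ≤ ν * (C * r ^ k) := by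
        calc ∑ t ∈ Finset.Ico k m, min 1 (C * r ^ t)
            ≤ ∑ t ∈ Finset.Ico k m, C * r ^ t :=
            Finset.sum_le_sum fun i _ => min_le_right _ _
          _ = C * r ^ k * ∑ i ∈ Finset.range (m - k), r ^ i := by
              rw [Finset.sum_Ico_eq_sum_range, Finset.mul_sum]
              apply Finset.sum_congr rfl
              intro i _
              rw [pow_add]; ring
          _ ≤ C * r ^ k * (1 - r)⁻¹ := by
              apply mul_le_mul_of_nonneg_left ?_ (by positivity)
              rw [geom_sum_eq hr1.ne, div_le_iff_of_neg (by linarith : r - 1 < 0)]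
              have hm1 : (1-r)⁻¹ * (r-1) = -1 := by
                rw [show r-1 = -(1-r) by ring, mul_neg, inv_mul_cancel₀ (by linarith : (1:ℝ)-r ≠ 0)]
              have := pow_nonneg hr0.le (m - k)
              linarith
          _ = ν * (C * r ^ k) := by
              have : (1 : ℝ) - r = 1/ν := by simp [hr]
              rw [this]; field_simp
      linarith
  refine (key n).trans ?_
  -- now show k + ν * C * r^k ≤ ν (log C + 1)
  have hCrk : C * r ^ k ≤ r ^ ε := by
    have hC0 : 0 < C := lt_of_lt_of_le one_pos hC
    have hrk : (r : ℝ) ^ (k : ℕ) = r ^ ((k : ℝ)) := by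
      rw [← Real.rpow_natCast]
    have hsplit : r ^ ((k:ℝ)) = r ^ L * r ^ ε := by
      rw [← Real.rpow_add hr0, hε]; ring_nf
    have hrL : r ^ L ≤ Real.exp (-(L/ν)) := by
      have hbase : r ≤ Real.exp (-(1/ν)) := by
        have := Real.add_one_le_exp (-(1/ν))
        linarith
      calc r ^ L ≤ (Real.exp (-(1/ν))) ^ L := Real.rpow_le_rpow hr0.le hbase hL0
        _ = Real.exp (-(1/ν) * L) := by rw [← Real.exp_mul]
        _ = Real.exp (-(L/ν)) := by ring_nf
    have hClog : C = Real.exp (L / ν) := by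
      have hLν : L / ν = Real.log C := by rw [hL]; field_simp
      rw [hLν, Real.exp_log hC0]
    calc C * r ^ (k:ℕ) = Real.exp (L/ν) * (r ^ L * r ^ ε) := by rw [← hClog, hrk, hsplit]
      _ ≤ Real.exp (L/ν) * (Real.exp (-(L/ν)) * r ^ ε) := by
          apply mul_le_mul_of_nonneg_left _ (Real.exp_pos _).le
          apply mul_le_mul_of_nonneg_right hrL (Real.rpow_nonneg hr0.le _)
      _ = r ^ ε := by rw [← mul_assoc, ← Real.exp_add]; ring_nf; simp
  have hbern : r ^ ε ≤ 1 - ε / ν := by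
    have hsν : (-1:ℝ) ≤ -(1/ν) := by
      have h' : 1/ν ≤ 1 := by rw [div_le_one hν0]; linarith
      linarith
    have := rpow_one_add_le_one_add_mul_self (s := -(1/ν)) hsν hε0 hε1
    have h' : (1 : ℝ) + -(1/ν) = r := by simp [hr]; ring
    rw [h'] at this
    calc r ^ ε ≤ 1 + ε * -(1/ν) := this
      _ = 1 - ε / ν := by ring
  calc (k : ℝ) + ν * (C * r ^ k) ≤ (L + ε) + ν * (1 - ε/ν) := by
        have h1 : (k : ℝ) = L + ε := by simp [hε]
        have h2 : ν * (C * r ^ k) ≤ ν * (1 - ε/ν) :=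
          mul_le_mul_of_nonneg_left (hCrk.trans hbern) hν0.le
        linarith
    _ = L + ν := by field_simp; ring
    _ = ν * (Real.log C + 1) := by rw [hL]; ring

/-- Expected-time part of the multiplicative drift theorem: with the process taking
values in `{0} ∪ [1,∞)`, starting below `Φmax ≥ 1` and having multiplicative drift
`(1 - 1/ν)`, the expected hitting time `E[T]` of `0` (written via
`E[T] = Σ_t Pr(T > t)`) is at most `ν (ln Φmax + 1)`. -/
theorem stmt4 {Ω : Type*} {m : MeasurableSpace Ω} (μ : Measure Ω) [IsProbabilityMeasure μ]
    (ℱ : Filtration ℕ m) (Φ : ℕ → Ω → ℝ) (ν Φmax : ℝ) (hν : 1 < ν) (hΦmax : 1 ≤ Φmax)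
    (hadapted : Adapted ℱ Φ) (hint : ∀ t, Integrable (Φ t) μ)
    (hval : ∀ t, ∀ᵐ ω ∂μ, Φ t ω = 0 ∨ 1 ≤ Φ t ω)
    (h0 : ∀ᵐ ω ∂μ, Φ 0 ω ≤ Φmax)
    (hdrift : ∀ t, μ[Φ (t + 1) | ℱ t] ≤ᵐ[μ] fun ω => (1 - 1 / ν) * Φ t ω) :
    ∑' t : ℕ, μ {ω | ∀ s ≤ t, Φ s ω ≠ 0} ≤
      ENNReal.ofReal (ν * (Real.log Φmax + 1)) := by
  have hν0 : 0 < ν := lt_trans one_pos hν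
  set r : ℝ := 1 - 1/ν with hr
  have hr0 : 0 < r := by
    have h1 : 1/ν < 1 := by rw [div_lt_one hν0]; exact hν
    rw [hr]; linarith
  have hnn : ∀ t, 0 ≤ᵐ[μ] Φ t := by
    intro t
    filter_upwards [hval t] with ω h
    rcases h with h | h
    · simp [h]
    · dsimp only [Pi.zero_apply]; linarith
  -- expectation bound
  have hE : ∀ t, ∫ ω, Φ t ω ∂μ ≤ r ^ t * Φmax := by
    intro t
    induction t with
    | zero =>
      have := integral_mono_ae (hint 0) (integrable_const Φmax) h0
      simpa using this
    | succ t ih =>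
      have h1 : ∫ ω, Φ (t+1) ω ∂μ = ∫ ω, (μ[Φ (t+1) | ℱ t]) ω ∂μ :=
        (integral_condExp (ℱ.le t)).symm
      have h2 : ∫ ω, (μ[Φ (t+1) | ℱ t]) ω ∂μ ≤ ∫ ω, r * Φ t ω ∂μ :=
        integral_mono_ae integrable_condExp ((hint t).const_mul r) (hdrift t)
      have h3 : ∫ ω, r * Φ t ω ∂μ = r * ∫ ω, Φ t ω ∂μ := integral_const_mul r _
      calc ∫ ω, Φ (t+1) ω ∂μ ≤ r * ∫ ω, Φ t ω ∂μ := by rw [h1, ← h3]; exact h2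
        _ ≤ r * (r ^ t * Φmax) := mul_le_mul_of_nonneg_left ih hr0.le
        _ = r ^ (t+1) * Φmax := by ring
  -- measure bound per t
  have hμ : ∀ t, μ {ω | ∀ s ≤ t, Φ s ω ≠ 0} ≤ ENNReal.ofReal (min 1 (Φmax * r ^ t)) := by
    intro t
    have hsub : {ω | ∀ s ≤ t, Φ s ω ≠ 0} ≤ᵐ[μ] {ω | 1 ≤ Φ t ω} := by
      filter_upwards [hval t] with ω h hω
      rcases h with h | h
      · exact absurd h (hω t le_rfl)
      · exact h
    have hmarkov := mul_meas_ge_le_integral_of_nonneg (hnn t) (hint t) 1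
    rw [one_mul] at hmarkov
    have hfin : μ {x | 1 ≤ Φ t x} ≠ ⊤ := measure_ne_top μ _
    have h1 : μ {ω | ∀ s ≤ t, Φ s ω ≠ 0} ≤ μ {x | 1 ≤ Φ t x} := measure_mono_ae hsub
    have h2 : μ {x | 1 ≤ Φ t x} ≤ ENNReal.ofReal (Φmax * r ^ t) := by
      rw [← ENNReal.ofReal_toReal hfin]
      exact ENNReal.ofReal_le_ofReal (hmarkov.trans ((hE t).trans_eq (mul_comm _ _)))
    have h3 : μ {ω | ∀ s ≤ t, Φ s ω ≠ 0} ≤ ENNReal.ofReal 1 := by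
      simpa using prob_le_one (μ := μ)
    rcases le_total (1:ℝ) (Φmax * r ^ t) with hc | hc
    · rw [min_eq_left hc]; exact h3
    · rw [min_eq_right hc]; exact h1.trans h2
  calc ∑' t : ℕ, μ {ω | ∀ s ≤ t, Φ s ω ≠ 0}
      ≤ ∑' t : ℕ, ENNReal.ofReal (min 1 (Φmax * r ^ t)) := ENNReal.tsum_le_tsum hμ
    _ ≤ ENNReal.ofReal (ν * (Real.log Φmax + 1)) := by
      rw [ENNReal.tsum_eq_iSup_sum]
      apply iSup_le
      intro s
      obtain ⟨n, hn⟩ := s.exists_nat_subset_range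
      have hnonneg : ∀ t : ℕ, 0 ≤ min 1 (Φmax * r ^ t) := fun t =>
        le_min zero_le_one (by positivity)
      rw [← ENNReal.ofReal_sum_of_nonneg (fun t _ => hnonneg t)]
      apply ENNReal.ofReal_le_ofReal
      calc ∑ t ∈ s, min 1 (Φmax * r ^ t)
          ≤ ∑ t ∈ Finset.range n, min 1 (Φmax * r ^ t) :=
          Finset.sum_le_sum_of_subset_of_nonneg hn (fun t _ _ => hnonneg t)
        _ ≤ ν * (Real.log Φmax + 1) := drift_sum_bound hν hΦmax n
end

section
/- Let ν > 1 and Φ_max ≥ 1 be reals, and let T = ⌈ln(Φ_max)·ν⌉, written as T = ln(Φ_max)·ν + ε with 0 ≤ ε < 1. Then T + (1 - 1/ν)^T · Φ_max · ν ≤ ν(ln(Φ_max) + 1). -/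
/-- Key numerical computation in the multiplicative drift theorem: with
`T = ⌈ln(Φmax)·ν⌉`, one has `T + (1 - 1/ν)^T · Φmax · ν ≤ ν (ln Φmax + 1)`. -/
theorem stmt8 (ν Φmax : ℝ) (hν : 1 < ν) (hΦ : 1 ≤ Φmax) :
    (⌈Real.log Φmax * ν⌉₊ : ℝ) +
        (1 - 1 / ν) ^ (⌈Real.log Φmax * ν⌉₊ : ℕ) * Φmax * ν ≤
      ν * (Real.log Φmax + 1) := by
  set L := Real.log Φmax with hL
  have hL0 : 0 ≤ L := Real.log_nonneg hΦ
  have hν0 : 0 < ν := by linarith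
  have hΦ0 : 0 < Φmax := by linarith
  set T := ⌈L * ν⌉₊ with hT
  have hTge : L * ν ≤ (T : ℝ) := Nat.le_ceil _
  have hTlt : (T : ℝ) < L * ν + 1 := by
    have := Nat.ceil_lt_add_one (by positivity : (0:ℝ) ≤ L * ν)
    simpa [hT] using this
  set ε := (T : ℝ) - L * ν with hε
  have hε0 : 0 ≤ ε := by simp only [hε]; linarith
  have hε1 : ε ≤ 1 := by simp only [hε]; linarith
  have ha0 : 0 < 1 - 1 / ν := by
    have : 1 / ν < 1 := by rw [div_lt_one hν0]; linarith
    linarith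
  have hpow : (1 - 1 / ν) ^ (T : ℕ) = (1 - 1 / ν) ^ ((T : ℝ)) :=
    (Real.rpow_natCast _ _).symm
  have hsplit : (1 - 1 / ν) ^ ((T : ℝ)) = (1 - 1/ν) ^ (L * ν) * (1 - 1/ν) ^ ε := by
    rw [← Real.rpow_add ha0, hε]; ring_nf
  have h1 : (1 - 1/ν) ^ (L * ν) ≤ Φmax⁻¹ := by
    have hle : 1 - 1 / ν ≤ Real.exp (-(1 / ν)) := by
      have := Real.add_one_le_exp (-(1 / ν)); linarith
    calc (1 - 1/ν) ^ (L * ν) ≤ (Real.exp (-(1/ν))) ^ (L * ν) :=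
          Real.rpow_le_rpow ha0.le hle (by positivity)
      _ = Real.exp (-(1/ν) * (L * ν)) := (Real.exp_mul _ _).symm
      _ = Real.exp (-L) := by congr 1; field_simp
      _ = Φmax⁻¹ := by rw [Real.exp_neg, Real.exp_log hΦ0]
  have h2 : (1 - 1/ν) ^ ε ≤ 1 - ε / ν := by
    have h := Real.geom_mean_le_arith_mean2_weighted (by linarith : (0:ℝ) ≤ 1 - ε)
      hε0 zero_le_one ha0.le (by ring)
    have h1ε : (1:ℝ) ^ (1 - ε) = 1 := Real.one_rpow _
    rw [h1ε, one_mul] at h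
    have heq : (1 - ε) * 1 + ε * (1 - 1/ν) = 1 - ε / ν := by field_simp; ring
    linarith [heq ▸ h]
  have hεpos : 0 ≤ (1 - 1/ν) ^ ε := Real.rpow_nonneg ha0.le _
  have hLpos : 0 ≤ (1 - 1/ν) ^ (L * ν) := Real.rpow_nonneg ha0.le _
  have key : (1 - 1/ν) ^ (T : ℕ) * Φmax * ν ≤ (1 - ε/ν) * ν := by
    rw [hpow, hsplit]
    have step1 : (1 - 1/ν) ^ (L * ν) * (1 - 1/ν) ^ ε * Φmax ≤ Φmax⁻¹ * (1 - 1/ν) ^ ε * Φmax := by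
      have := mul_le_mul_of_nonneg_right (mul_le_mul_of_nonneg_right h1 hεpos) hΦ0.le
      linarith
    have step2 : Φmax⁻¹ * (1 - 1/ν) ^ ε * Φmax = (1 - 1/ν) ^ ε := by
      field_simp
    have step3 : (1 - 1/ν) ^ ε * ν ≤ (1 - ε/ν) * ν :=
      mul_le_mul_of_nonneg_right h2 hν0.le
    calc (1 - 1/ν) ^ (L * ν) * (1 - 1/ν) ^ ε * Φmax * ν
        ≤ Φmax⁻¹ * (1 - 1/ν) ^ ε * Φmax * ν := mul_le_mul_of_nonneg_right step1 hν0.le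
      _ = (1 - 1/ν) ^ ε * ν := by rw [step2]
      _ ≤ (1 - ε/ν) * ν := step3
  have hfin : (1 - ε/ν) * ν = ν - ε := by field_simp
  have hTe : (T : ℝ) = L * ν + ε := by simp [hε]
  rw [hfin] at key
  nlinarith [key]
end

section
/- Fix a positive constant c and c̃ = max{1,c}. For the (1+1) EA minimising any linear function over {0,1}^n with mutation rate c/n and uniformly random initial solution, there is n₀ such that for n ≥ n₀ the probability that the optimisation time is at most n·ln(n)/(2(c̃+1)) is at most exp(-n/36) + exp(-(1/3)·n^{1/2}). -/
open MeasureTheory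

/-- The Bernoulli measure on `Bool` with success probability `p`. -/
noncomputable def bern (p : ℝ) : Measure Bool :=
  ENNReal.ofReal p • Measure.dirac true + ENNReal.ofReal (1 - p) • Measure.dirac false

/-- Apply a mutation mask `y` to a bit string `x`. -/
def flipv {n : ℕ} (x y : Fin n → Bool) : Fin n → Bool := fun j => xor (x j) (y j)

/-- The linear objective value of a bit string. -/
noncomputable def fval {n : ℕ} (a : Fin n → ℝ) (x : Fin n → Bool) : ℝ :=
  ∑ j, a j * (if x j = true then (1 : ℝ) else 0)

/-- One mutation-selection step of the (1+1) EA minimising the linear function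
with coefficients `a`, using mutation mask `y`. -/
noncomputable def step {n : ℕ} (a : Fin n → ℝ) (x y : Fin n → Bool) : Fin n → Bool :=
  if fval a (flipv x y) ≤ fval a x then flipv x y else x

/-- The trajectory of the (1+1) EA from initial solution `x0` using the sequence
of mutation masks `ys` (masks beyond index `T` are ignored). -/
noncomputable def traj {n T : ℕ} (a : Fin n → ℝ) (x0 : Fin n → Bool)
    (ys : Fin T → Fin n → Bool) : ℕ → Fin n → Bool
  | 0 => x0
  | t + 1 => if h : t < T then step a (traj a x0 ys t) (ys ⟨t, h⟩) else traj a x0 ys t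

section Aux

open Finset ENNReal

lemma bern_apply (p : ℝ) (b : Bool) :
    bern p {b} = (bif b then ENNReal.ofReal p else ENNReal.ofReal (1-p)) := by
  cases b <;> simp [bern, Measure.dirac_apply, MeasurableSet.of_discrete]

lemma bern_prob {p : ℝ} (h0 : 0 ≤ p) (h1 : p ≤ 1) : IsProbabilityMeasure (bern p) := by
  constructor
  simp only [bern, Measure.coe_add, Measure.coe_smul, Pi.add_apply, Pi.smul_apply,
    Measure.dirac_apply_of_mem (Set.mem_univ _), smul_eq_mul, mul_one]
  rw [← ENNReal.ofReal_add h0 (by linarith)]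
  norm_num

lemma meas_finset {β : Type*} [MeasurableSpace β] [MeasurableSingletonClass β]
    (ν : Measure β) (A : Finset β) : ν ↑A = ∑ y ∈ A, ν {y} := by
  have h : (↑A : Set β) = ⋃ y ∈ A, {y} := by ext z; simp
  rw [h, measure_biUnion_finset]
  · intro x _ y _ hxy
    simp [Function.onFun, Set.disjoint_singleton, hxy]
  · intro b _; exact measurableSet_singleton b

open Classical in
lemma core (n T : ℕ) (p : ℝ) (h0 : 0 ≤ p) (h1 : p ≤ 1) (S : Finset (Fin n)) :
    (Measure.pi fun _ : Fin T => Measure.pi fun _ : Fin n => bern p)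
      {ys : Fin T → Fin n → Bool | ∀ j ∈ S, ∃ t, ys t j = true}
      = (ENNReal.ofReal (1 - (1-p)^T))^S.card := by
  haveI := bern_prob h0 h1
  set w : Bool → ℝ≥0∞ := fun b => bif b then ENNReal.ofReal p else ENNReal.ofReal (1-p) with hw
  have hsingle : ∀ ys : Fin T → Fin n → Bool,
      (Measure.pi fun _ : Fin T => Measure.pi fun _ : Fin n => bern p) {ys}
        = ∏ t, ∏ j, w (ys t j) := by
    intro ys
    rw [← Set.univ_pi_singleton, Measure.pi_pi]
    refine Finset.prod_congr rfl fun t _ => ?_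
    rw [← Set.univ_pi_singleton, Measure.pi_pi]
    exact Finset.prod_congr rfl fun j _ => bern_apply p (ys t j)
  have hset : {ys : Fin T → Fin n → Bool | ∀ j ∈ S, ∃ t, ys t j = true}
      = ↑(univ.filter fun ys : Fin T → Fin n → Bool => ∀ j ∈ S, ∃ t, ys t j = true) := by
    ext ys; simp
  rw [hset, meas_finset]
  simp_rw [hsingle]
  set G : (Fin T → Bool) → ℝ≥0∞ := fun u => ∏ t, w (u t) with hG
  set HitF : Finset (Fin T → Bool) := univ.filter (fun u => ∃ t, u t = true) with hH
  have hU : ∑ u : Fin T → Bool, G u = 1 := by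
    have : ∑ u ∈ Fintype.piFinset (fun _ : Fin T => (univ : Finset Bool)), ∏ t, w (u t)
        = ∏ t : Fin T, ∑ b : Bool, w b := (Finset.prod_univ_sum _ _).symm
    rw [Fintype.piFinset_univ] at this
    have hb : ∑ b : Bool, w b = 1 := by
      simp only [Fintype.sum_bool, hw, cond_true, cond_false]
      rw [← ENNReal.ofReal_add h0 (by linarith)]
      norm_num
    simp only [hG]
    rw [this, hb]
    exact Finset.prod_const_one
  have hF : ∑ u ∈ HitFᶜ, G u = ENNReal.ofReal ((1-p)^T) := by
    have hc : HitFᶜ = {fun _ => false} := by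
      ext u
      simp only [hH, mem_compl, mem_filter, mem_univ, true_and, not_exists, mem_singleton]
      constructor
      · intro h; funext t; simpa using h t
      · intro h t; rw [h]; simp
    rw [hc, Finset.sum_singleton]
    simp [hG, hw, ENNReal.ofReal_pow (by linarith : (0:ℝ) ≤ 1 - p)]
  have hHit : ∑ u ∈ HitF, G u = ENNReal.ofReal (1 - (1-p)^T) := by
    have hsplit : ∑ u ∈ HitF, G u + ∑ u ∈ HitFᶜ, G u = ∑ u : Fin T → Bool, G u :=
      Finset.sum_add_sum_compl HitF G
    rw [hU, hF] at hsplit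
    have hq1 : (1-p)^T ≤ 1 := pow_le_one₀ (by linarith) (by linarith)
    have hq0 : (0:ℝ) ≤ (1-p)^T := pow_nonneg (by linarith) T
    have : ENNReal.ofReal (1 - (1-p)^T) + ENNReal.ofReal ((1-p)^T) = 1 := by
      rw [← ENNReal.ofReal_add (by linarith) hq0]; norm_num
    have hfin : ENNReal.ofReal ((1-p)^T) ≠ ⊤ := ENNReal.ofReal_ne_top
    exact WithTop.add_right_cancel hfin (hsplit.trans this.symm)
  set A : Fin n → Finset (Fin T → Bool) := fun j => if j ∈ S then HitF else univ with hA
  have hfac : ∑ ys ∈ (univ.filter fun ys : Fin T → Fin n → Bool => ∀ j ∈ S, ∃ t, ys t j = true),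
      ∏ t, ∏ j, w (ys t j) = ∏ j : Fin n, ∑ u ∈ A j, G u := by
    rw [Finset.prod_univ_sum]
    refine Finset.sum_nbij' (fun ys => fun j t => ys t j) (fun z => fun t j => z j t) ?_ ?_
      (fun _ _ => rfl) (fun _ _ => rfl) ?_
    · intro ys hys
      simp only [mem_filter, mem_univ, true_and] at hys
      rw [Fintype.mem_piFinset]
      intro j
      by_cases hj : j ∈ S <;> simp [hA, hj, hH, hys j]
    · intro z hz
      rw [Fintype.mem_piFinset] at hz
      simp only [mem_filter, mem_univ, true_and]
      intro j hj
      have h2 := hz j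
      simp only [hA, hj, if_pos, hH, mem_filter, mem_univ, true_and] at h2
      exact h2
    · intro ys _
      exact Finset.prod_comm
  rw [hfac]
  have : ∏ j : Fin n, ∑ u ∈ A j, G u
      = ∏ j : Fin n, (if j ∈ S then ENNReal.ofReal (1 - (1-p)^T) else 1) := by
    refine Finset.prod_congr rfl fun j _ => ?_
    by_cases hj : j ∈ S <;> simp [hA, hj, hHit, hU]
  rw [this, Finset.prod_ite_mem, Finset.univ_inter, Finset.prod_const]

lemma traj_untouched {n T : ℕ} (a : Fin n → ℝ) (x0 : Fin n → Bool)
    (ys : Fin T → Fin n → Bool) (j : Fin n) (h : ∀ s : Fin T, ys s j = false) :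
    ∀ t, traj a x0 ys t j = x0 j := by
  intro t
  induction t with
  | zero => rfl
  | succ t ih =>
    show traj a x0 ys (t+1) j = x0 j
    rw [traj]
    by_cases ht : t < T
    · simp only [ht, dif_pos]
      unfold step
      split
      · show xor (traj a x0 ys t j) (ys ⟨t, ht⟩ j) = x0 j
        rw [h ⟨t, ht⟩, ih]
        simp
      · exact ih
    · simp only [ht, dif_neg, not_false_iff, ih]

open Classical in
lemma count_low (n m : ℕ) :
    (((univ : Finset (Fin n → Bool)).filter
        (fun x => ((univ : Finset (Fin n)).filter fun j => x j = true).card < m)).card : ℝ)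
      ≤ 2^m * (3/2)^n := by
  set g : Bool → ℝ := fun b => if b = true then (1/2 : ℝ) else 1 with hg
  have hprod : ∀ x : Fin n → Bool, ∏ j, g (x j)
      = (1/2 : ℝ) ^ ((univ : Finset (Fin n)).filter fun j => x j = true).card := by
    intro x
    rw [hg]
    rw [Finset.prod_ite (f := fun _ => (1/2:ℝ)) (g := fun _ => (1:ℝ))]
    simp
  have hsum : ∑ x : Fin n → Bool, ∏ j, g (x j) = (3/2 : ℝ)^n := by
    have : ∑ x ∈ Fintype.piFinset (fun _ : Fin n => (univ : Finset Bool)), ∏ j, g (x j)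
        = ∏ j : Fin n, ∑ b : Bool, g b := (Finset.prod_univ_sum _ _).symm
    rw [Fintype.piFinset_univ] at this
    rw [this]
    norm_num [hg]
    rw [div_pow]
  calc ((filter (fun x : Fin n → Bool =>
        (filter (fun j => x j = true) univ).card < m) univ).card : ℝ)
      = ∑ x ∈ filter (fun x : Fin n → Bool =>
        (filter (fun j => x j = true) univ).card < m) univ, 1 := by simp
    _ ≤ ∑ x ∈ filter (fun x : Fin n → Bool =>
        (filter (fun j => x j = true) univ).card < m) univ, 2^m * ∏ j, g (x j) := by
        refine Finset.sum_le_sum fun x hx => ?_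
        rw [hprod x]
        simp only [mem_filter, mem_univ, true_and] at hx
        have hk : ((1:ℝ)/2)^m ≤ (1/2)^((filter (fun j => x j = true) univ).card) :=
          pow_le_pow_of_le_one (by norm_num) (by norm_num) hx.le
        calc (1:ℝ) = 2^m * (1/2)^m := by rw [← mul_pow]; norm_num
          _ ≤ _ := by
            apply mul_le_mul_of_nonneg_left hk (by positivity)
    _ ≤ ∑ x : Fin n → Bool, 2^m * ∏ j, g (x j) := by
        apply Finset.sum_le_sum_of_subset_of_nonneg (Finset.filter_subset _ _)
        intro x _ _
        have : (0:ℝ) ≤ ∏ j, g (x j) := by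
          apply Finset.prod_nonneg
          intro j _; rw [hg]; dsimp only; split <;> norm_num
        positivity
    _ = 2^m * (3/2)^n := by rw [← Finset.mul_sum, hsum]

lemma exp_twelfth : Real.exp (1/12 : ℝ) ≤ 12/11 := by
  have h := Real.add_one_le_exp (-(1/12) : ℝ)
  have hprod : Real.exp (1/12 : ℝ) * Real.exp (-(1/12) : ℝ) = 1 := by
    rw [← Real.exp_add]; norm_num
  nlinarith [Real.exp_pos (1/12 : ℝ)]

lemma R1 (m n : ℕ) (h3m : 3*m ≤ n+2) (hn : 20 ≤ n) :
    (2:ℝ)^m * (3/2)^n ≤ 2^n * Real.exp (-(n:ℝ)/36) := by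
  have hkey : (2:ℝ)^m * (3/2)^n * Real.exp ((n:ℝ)/36) ≤ 2^n := by
    have hcube : ((2:ℝ)^m * (3/2)^n * Real.exp ((n:ℝ)/36))^3 ≤ ((2:ℝ)^n)^3 := by
      have e1 : ((2:ℝ)^m * (3/2)^n * Real.exp ((n:ℝ)/36))^3
          = 2^(3*m) * (27/8)^n * Real.exp ((n:ℝ)/12) := by
        have ha : (((3:ℝ)/2)^n)^3 = (27/8)^n := by
          rw [← pow_mul, mul_comm, pow_mul]; norm_num
        rw [mul_pow, mul_pow, ha, ← pow_mul, mul_comm m 3, ← Real.exp_nat_mul]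
        congr 1
        push_cast; ring
      rw [e1]
      have h2 : (2:ℝ)^(3*m) ≤ 4 * 2^n := by
        calc (2:ℝ)^(3*m) ≤ 2^(n+2) := pow_le_pow_right₀ (by norm_num) h3m
          _ = 4 * 2^n := by ring
      have h3 : Real.exp ((n:ℝ)/12) ≤ (12/11)^n := by
        calc Real.exp ((n:ℝ)/12) = Real.exp ((1/12 : ℝ))^n := by
              rw [← Real.exp_nat_mul]; congr 1; ring
          _ ≤ (12/11)^n := pow_le_pow_left₀ (Real.exp_nonneg _) exp_twelfth n
      have h4 : (4:ℝ) * 81^n ≤ 88^n := by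
        obtain ⟨k, rfl⟩ := Nat.exists_eq_add_of_le hn
        calc (4:ℝ) * 81^(20+k) = (4*81^20) * 81^k := by rw [pow_add]; ring
          _ ≤ 88^20 * 88^k :=
              mul_le_mul (by norm_num) (pow_le_pow_left₀ (by norm_num) (by norm_num) k)
                (by positivity) (by positivity)
          _ = 88^(20+k) := by rw [pow_add]
      calc (2:ℝ)^(3*m) * (27/8)^n * Real.exp ((n:ℝ)/12)
          ≤ (4 * 2^n) * (27/8)^n * (12/11)^n := by
            apply mul_le_mul (mul_le_mul_of_nonneg_right h2 (by positivity)) h3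
              (Real.exp_nonneg _) (by positivity)
        _ = 4 * (81/11)^n := by
            rw [show (81/11:ℝ) = 2*((27/8)*(12/11)) by norm_num, mul_pow, mul_pow]; ring
        _ ≤ ((2:ℝ)^n)^3 := by
            rw [show (((2:ℝ)^n)^3) = (2^3)^n from pow_right_comm 2 n 3]
            rw [div_pow, ← mul_div_assoc, div_le_iff₀ (by positivity), ← mul_pow]
            norm_num
            exact h4
    have h0 : (0:ℝ) ≤ (2:ℝ)^m * (3/2)^n * Real.exp ((n:ℝ)/36) := by positivity
    exact (pow_le_pow_iff_left₀ h0 (by positivity) (by norm_num)).mp hcube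
  rw [neg_div, Real.exp_neg, ← div_eq_mul_inv, le_div_iff₀ (Real.exp_pos _)]
  exact hkey

lemma R2 (c : ℝ) (hc : 0 < c) (n T m k : ℕ)
    (hnc : c^2 + c + 1 ≤ (n:ℝ)) (hn1 : 1 ≤ n)
    (hT : (T:ℝ) ≤ (n:ℝ) * Real.log n / (2 * (max 1 c + 1)))
    (hm : (n:ℝ) ≤ 3*m) (hk : m ≤ k) :
    (1 - (1 - c/n)^T)^k ≤ Real.exp (-(1/3) * Real.sqrt n) := by
  have hn0 : (0:ℝ) < n := by positivity
  have hcn : c < (n:ℝ) := by nlinarith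
  have hp0 : (0:ℝ) < c/n := by positivity
  have hp1 : c/n < 1 := (div_lt_one hn0).mpr hcn
  have hlog : 0 ≤ Real.log n := Real.log_nonneg (by exact_mod_cast hn1)
  set ct := max 1 c with hct
  have hctc : c ≤ ct := le_max_right _ _
  have hct1 : 1 ≤ ct := le_max_left _ _
  have hA : Real.exp (-((1/2) * Real.log n)) ≤ (1 - c/n)^T := by
    have hnc0 : (0:ℝ) < (n:ℝ) - c := by linarith
    have hexp1 : Real.exp (-(c/((n:ℝ)-c))) ≤ 1 - c/n := by
      have h := Real.add_one_le_exp (c/((n:ℝ)-c))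
      have hpos : (0:ℝ) < c/((n:ℝ)-c) + 1 := by positivity
      rw [Real.exp_neg]
      have h2 : (Real.exp (c/((n:ℝ)-c)))⁻¹ ≤ (c/((n:ℝ)-c) + 1)⁻¹ :=
        inv_anti₀ hpos h
      refine h2.trans ?_
      rw [show c/((n:ℝ)-c) + 1 = (n:ℝ)/((n:ℝ)-c) by field_simp; ring]
      rw [show (1:ℝ) - c/n = ((n:ℝ)-c)/n by field_simp]
      rw [inv_div]
    have hpow : Real.exp (-(c/((n:ℝ)-c)))^T ≤ (1 - c/n)^T :=
      pow_le_pow_left₀ (Real.exp_nonneg _) hexp1 T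
    have heq : Real.exp (-(c/((n:ℝ)-c)))^T = Real.exp (-(T * (c/((n:ℝ)-c)))) := by
      rw [← Real.exp_nat_mul]; congr 1; ring
    refine le_trans ?_ hpow
    rw [heq]
    apply Real.exp_le_exp.mpr
    apply neg_le_neg
    have hTc : (T:ℝ) * (c/((n:ℝ)-c)) ≤ ((n:ℝ) * Real.log n / (2*(ct+1))) * (c/((n:ℝ)-c)) := by
      apply mul_le_mul_of_nonneg_right hT (by positivity)
    refine hTc.trans ?_
    rw [div_mul_div_comm]
    rw [div_le_iff₀ (by positivity)]
    have hkey : (n:ℝ) * c ≤ (ct+1) * ((n:ℝ)-c) := by nlinarith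
    calc (n:ℝ) * Real.log n * c = Real.log n * ((n:ℝ)*c) := by ring
      _ ≤ Real.log n * ((ct+1)*((n:ℝ)-c)) := by
          apply mul_le_mul_of_nonneg_left hkey hlog
      _ = 1/2 * Real.log n * (2*(ct+1)*((n:ℝ)-c)) := by ring
  have hq1 : (1 - c/n)^T ≤ 1 := pow_le_one₀ (by linarith) (by linarith)
  have hq0 : (0:ℝ) ≤ (1 - c/n)^T := pow_nonneg (by linarith) T
  set q := (1 - c/n)^T with hqdef
  have h1q : 1 - q ≤ Real.exp (-q) := by
    have := Real.add_one_le_exp (-q); linarith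
  have hpow2 : (1-q)^k ≤ Real.exp (-q)^k := pow_le_pow_left₀ (by linarith) h1q k
  have heq2 : Real.exp (-q)^k = Real.exp (-(k*q)) := by
    rw [← Real.exp_nat_mul]; congr 1; ring
  refine hpow2.trans ?_
  rw [heq2, show (-(1/3) * Real.sqrt n : ℝ) = -((1/3) * Real.sqrt n) by ring]
  apply Real.exp_le_exp.mpr
  apply neg_le_neg
  have hsq : (0:ℝ) < Real.sqrt n := Real.sqrt_pos.mpr hn0
  have hss : Real.sqrt n * Real.sqrt n = n := Real.mul_self_sqrt hn0.le
  have hs : Real.exp (-((1/2) * Real.log n)) = (Real.sqrt n)⁻¹ := by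
    rw [Real.exp_neg]
    congr 1
    rw [Real.sqrt_eq_rpow, Real.rpow_def_of_pos hn0]
    congr 1
    ring
  calc (1/3:ℝ) * Real.sqrt n
      = ((n:ℝ)/3) * (Real.sqrt n)⁻¹ := by
        field_simp
        nlinarith [hss]
    _ ≤ (k:ℝ) * (Real.sqrt n)⁻¹ := by
        apply mul_le_mul_of_nonneg_right ?_ (by positivity)
        have : (m:ℝ) ≤ k := by exact_mod_cast hk
        linarith
    _ ≤ (k:ℝ) * q := by
        apply mul_le_mul_of_nonneg_left ?_ (by positivity)
        rw [← hs]; exact hA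

end Aux

open ENNReal

/-- Lower-bound theorem: for the (1+1) EA minimising any linear function over
`{0,1}^n` with mutation rate `c/n` and uniformly random initial solution, for all
large `n` the probability that the optimisation time is at most
`n ln n / (2(c̃+1))` (with `c̃ = max 1 c`) is at most
`exp(-n/36) + exp(-(1/3)√n)`. -/
theorem stmt14 (c : ℝ) (hc : 0 < c) :
    ∃ n₀ : ℕ, ∀ n : ℕ, n₀ ≤ n → ∀ a : Fin n → ℝ, (∀ j, 0 < a j) →
      ((PMF.uniformOfFintype (Fin n → Bool)).toMeasure.prod
          (Measure.pi fun _ : Fin ⌊(n : ℝ) * Real.log n / (2 * (max 1 c + 1))⌋₊ =>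
            Measure.pi fun _ : Fin n => bern (c / n)))
        {ω | ∃ t ≤ ⌊(n : ℝ) * Real.log n / (2 * (max 1 c + 1))⌋₊,
            traj a ω.1 ω.2 t = fun _ => false} ≤
      ENNReal.ofReal (Real.exp (-(n : ℝ) / 36) + Real.exp (-(1 / 3) * Real.sqrt n)) := by
  classical
  refine ⟨max 20 ⌈c^2 + c + 1⌉₊, fun n hn a _ => ?_⟩
  have hn20 : 20 ≤ n := le_trans (le_max_left _ _) hn
  have hn1 : 1 ≤ n := by omega
  have hnc : c^2 + c + 1 ≤ (n:ℝ) := by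
    have h := le_trans (le_max_right 20 ⌈c^2 + c + 1⌉₊) hn
    calc c^2+c+1 ≤ (⌈c^2+c+1⌉₊ : ℝ) := Nat.le_ceil _
      _ ≤ n := by exact_mod_cast h
  have hn0 : (0:ℝ) < n := by positivity
  have hcn : c < (n:ℝ) := by nlinarith
  have hp0 : (0:ℝ) ≤ c/(n:ℝ) := by positivity
  have hp1 : c/(n:ℝ) ≤ 1 := le_of_lt ((div_lt_one hn0).mpr hcn)
  have hlog : 0 ≤ Real.log n := Real.log_nonneg (by exact_mod_cast hn1)
  haveI hbern : IsProbabilityMeasure (bern (c/n)) := bern_prob hp0 hp1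
  set T := ⌊(n : ℝ) * Real.log n / (2 * (max 1 c + 1))⌋₊ with hTdef
  have hTle : (T:ℝ) ≤ (n : ℝ) * Real.log n / (2 * (max 1 c + 1)) := by
    apply Nat.floor_le
    apply div_nonneg (mul_nonneg hn0.le hlog)
    positivity
  set m := (n+2)/3 with hmdef
  have hdm := Nat.div_add_mod (n+2) 3
  have hmod : (n+2) % 3 < 3 := Nat.mod_lt _ (by norm_num)
  have h3m : 3*m ≤ n+2 := by omega
  have hm3 : (n:ℝ) ≤ 3*(m:ℝ) := by
    have : n ≤ 3*m := by omega
    exact_mod_cast this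
  set μ1 := (PMF.uniformOfFintype (Fin n → Bool)).toMeasure with hμ1
  set μ2 := Measure.pi (fun _ : Fin T => Measure.pi fun _ : Fin n => bern (c/n)) with hμ2
  set ones : (Fin n → Bool) → ℕ :=
    fun x => ((Finset.univ : Finset (Fin n)).filter fun j => x j = true).card with hones
  set A1 : Set ((Fin n → Bool) × (Fin T → Fin n → Bool)) :=
    {x | ones x < m} ×ˢ Set.univ with hA1
  set A2 : Set ((Fin n → Bool) × (Fin T → Fin n → Bool)) :=
    {ω | m ≤ ones ω.1 ∧ ∀ j, ω.1 j = true → ∃ t, ω.2 t j = true} with hA2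
  have hsub : {ω : (Fin n → Bool) × (Fin T → Fin n → Bool) |
      ∃ t ≤ T, traj a ω.1 ω.2 t = fun _ => false} ⊆ A1 ∪ A2 := by
    rintro ⟨x, ys⟩ ⟨t, _, htraj⟩
    by_cases hx : ones x < m
    · exact Or.inl ⟨hx, Set.mem_univ _⟩
    · refine Or.inr ⟨Nat.le_of_not_lt hx, fun j hj => ?_⟩
      by_contra hno
      push_neg at hno
      have hzero : ∀ s : Fin T, ys s j = false := by
        intro s
        have := hno s
        simpa using this
      have hkeep := traj_untouched a x ys j hzero t
      rw [htraj] at hkeep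
      simp only [] at hj
      rw [hj] at hkeep
      simp at hkeep
  refine le_trans (measure_mono hsub) ?_
  refine le_trans (measure_union_le _ _) ?_
  have hμA1 : (μ1.prod μ2) A1 ≤ ENNReal.ofReal (Real.exp (-(n:ℝ)/36)) := by
    have hfs : ({x | ones x < m} : Set (Fin n → Bool))
        = ↑((Finset.univ : Finset (Fin n → Bool)).filter fun x => ones x < m) := by
      ext x; simp
    rw [hA1, Measure.prod_prod, measure_univ, mul_one, hfs, hμ1,
      PMF.toMeasure_apply_finset]
    simp only [PMF.uniformOfFintype_apply]
    rw [Finset.sum_const, nsmul_eq_mul]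
    have hcard2 : (Fintype.card (Fin n → Bool)) = 2^n := by
      simp [Fintype.card_fun]
    set K := ((Finset.univ : Finset (Fin n → Bool)).filter fun x => ones x < m).card with hK
    have hKR : (K:ℝ) ≤ 2^n * Real.exp (-(n:ℝ)/36) :=
      le_trans (count_low n m) (R1 m n h3m hn20)
    have h2n0 : ((2^n : ℕ) : ℝ≥0∞) ≠ 0 :=
      Nat.cast_ne_zero.mpr (by positivity)
    have h2nt : ((2^n : ℕ) : ℝ≥0∞) ≠ ⊤ := by simp
    rw [hcard2]
    have hKle : ((K:ℕ):ℝ≥0∞) ≤ ENNReal.ofReal (Real.exp (-(n:ℝ)/36)) * ((2^n : ℕ) : ℝ≥0∞) := by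
      rw [show ((K:ℕ):ℝ≥0∞) = ENNReal.ofReal (K:ℝ) from (ENNReal.ofReal_natCast _).symm,
        show (((2^n : ℕ)):ℝ≥0∞) = ENNReal.ofReal ((2^n : ℕ):ℝ) from (ENNReal.ofReal_natCast _).symm,
        ← ENNReal.ofReal_mul (Real.exp_nonneg _)]
      apply ENNReal.ofReal_le_ofReal
      push_cast
      linarith [hKR]
    calc (K : ℝ≥0∞) * (((2^n : ℕ) : ℝ≥0∞))⁻¹
        ≤ (ENNReal.ofReal (Real.exp (-(n:ℝ)/36)) * ((2^n : ℕ) : ℝ≥0∞)) * (((2^n : ℕ) : ℝ≥0∞))⁻¹ :=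
          mul_le_mul_left hKle _
      _ = ENNReal.ofReal (Real.exp (-(n:ℝ)/36)) := by
          rw [mul_assoc, ENNReal.mul_inv_cancel h2n0 h2nt, mul_one]
  have hμA2 : (μ1.prod μ2) A2 ≤ ENNReal.ofReal (Real.exp (-(1/3) * Real.sqrt n)) := by
    rw [Measure.prod_apply MeasurableSet.of_discrete]
    have hpt : ∀ x : Fin n → Bool,
        μ2 (Prod.mk x ⁻¹' A2) ≤ ENNReal.ofReal (Real.exp (-(1/3) * Real.sqrt n)) := by
      intro x
      by_cases hx : m ≤ ones x
      · have hpre : Prod.mk x ⁻¹' A2 ⊆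
            {ys : Fin T → Fin n → Bool |
              ∀ j ∈ ((Finset.univ : Finset (Fin n)).filter fun j => x j = true),
                ∃ t, ys t j = true} := by
          intro ys hys j hj
          simp only [Finset.mem_filter] at hj
          exact hys.2 j hj.2
        refine le_trans (measure_mono hpre) ?_
        rw [hμ2, core n T (c/n) hp0 hp1 _]
        have hb0 : (0:ℝ) ≤ 1 - (1 - c/n)^T := by
          have : (1 - c/(n:ℝ))^T ≤ 1 := pow_le_one₀ (by linarith) (by linarith)
          linarith
        rw [← ENNReal.ofReal_pow hb0]
        apply ENNReal.ofReal_le_ofReal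
        exact R2 c hc n T m (ones x) hnc hn1 hTle hm3 hx
      · have hpre : Prod.mk x ⁻¹' A2 = ∅ := by
          ext ys
          simp only [Set.mem_preimage, Set.mem_empty_iff_false, iff_false]
          intro hys
          exact hx hys.1
        rw [hpre]
        simp
    calc ∫⁻ x, μ2 (Prod.mk x ⁻¹' A2) ∂μ1
        ≤ ∫⁻ _, ENNReal.ofReal (Real.exp (-(1/3) * Real.sqrt n)) ∂μ1 := lintegral_mono hpt
      _ = ENNReal.ofReal (Real.exp (-(1/3) * Real.sqrt n)) := by
          rw [lintegral_const, measure_univ, mul_one]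
  calc (μ1.prod μ2) A1 + (μ1.prod μ2) A2
      ≤ ENNReal.ofReal (Real.exp (-(n:ℝ)/36))
        + ENNReal.ofReal (Real.exp (-(1/3) * Real.sqrt n)) := add_le_add hμA1 hμA2
    _ = ENNReal.ofReal (Real.exp (-(n : ℝ) / 36) + Real.exp (-(1 / 3) * Real.sqrt n)) := by
        rw [← ENNReal.ofReal_add (Real.exp_nonneg _) (Real.exp_nonneg _)]
end

section
/- Let ν > 1 and suppose a process (Φ_t) with values in {0} ∪ [1, ∞) satisfies the multiplicative drift condition E[Φ_{t+1}|history] ≤ (1-1/ν)Φ_t whenever Φ_t ≥ 1, and the search space is partitioned into k fitness-based levels M_0, ..., M_k (with M_0 the optimum), where within level j the drift function ranges between m_j = min Φ on M_j and M̄_j = max Φ on M_j, and levels can never be re-entered once left downward. Then the expected hitting time of M_0 is at most ν · Σ_{j=1}^{k} (ln M̄_j - ln m_j + 1). -/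
open MeasureTheory

noncomputable def pwSum (lM lm : ℕ → ℝ) (n : ℕ) : ℝ :=
  ∑ l ∈ Finset.Icc 1 n, (Real.log (lM l) - Real.log (lm l) + 1)

noncomputable def pwH {S : Type*} (Φ : S → ℝ) (lvl : S → ℕ) (lm lM : ℕ → ℝ) (ν : ℝ)
    (s : S) : ℝ :=
  if lvl s = 0 then 0
  else ν * (pwSum lM lm (lvl s - 1) +
      (Real.log (Φ s) - Real.log (lm (lvl s)) + 1))

lemma pw_term_nonneg {lm lM : ℕ → ℝ} {k : ℕ}
    (hm : ∀ j, 1 ≤ j → j ≤ k → 1 ≤ lm j ∧ lm j ≤ lM j)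
    {l : ℕ} (h1 : 1 ≤ l) (h2 : l ≤ k) :
    0 ≤ Real.log (lM l) - Real.log (lm l) + 1 := by
  obtain ⟨ha, hb⟩ := hm l h1 h2
  have := Real.log_le_log (by linarith) hb
  linarith

lemma pwSum_nonneg {lm lM : ℕ → ℝ} {k : ℕ}
    (hm : ∀ j, 1 ≤ j → j ≤ k → 1 ≤ lm j ∧ lm j ≤ lM j)
    {n : ℕ} (hn : n ≤ k) : 0 ≤ pwSum lM lm n := by
  refine Finset.sum_nonneg fun l hl => ?_
  rw [Finset.mem_Icc] at hl
  exact pw_term_nonneg hm hl.1 (hl.2.trans hn)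

lemma pwSum_mono {lm lM : ℕ → ℝ} {k : ℕ}
    (hm : ∀ j, 1 ≤ j → j ≤ k → 1 ≤ lm j ∧ lm j ≤ lM j)
    {a b : ℕ} (hab : a ≤ b) (hb : b ≤ k) : pwSum lM lm a ≤ pwSum lM lm b := by
  refine Finset.sum_le_sum_of_subset_of_nonneg (Finset.Icc_subset_Icc_right hab)
    fun l hl _ => ?_
  rw [Finset.mem_Icc] at hl
  exact pw_term_nonneg hm hl.1 (hl.2.trans hb)

section main
variable {S : Type*} {Φ : S → ℝ} {lvl : S → ℕ} {lm lM : ℕ → ℝ} {ν : ℝ} {k : ℕ}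

lemma pw_facts (hlvlk : ∀ s, lvl s ≤ k)
    (hbounds : ∀ s, lvl s ≠ 0 → lm (lvl s) ≤ Φ s ∧ Φ s ≤ lM (lvl s))
    (hm : ∀ j, 1 ≤ j → j ≤ k → 1 ≤ lm j ∧ lm j ≤ lM j)
    {s : S} (hs : lvl s ≠ 0) :
    1 ≤ lm (lvl s) ∧ lm (lvl s) ≤ Φ s ∧ Φ s ≤ lM (lvl s) ∧
      0 ≤ Real.log (Φ s) - Real.log (lm (lvl s)) ∧
      Real.log (Φ s) ≤ Real.log (lM (lvl s)) := by
  obtain ⟨h1, h2⟩ := hm (lvl s) (Nat.one_le_iff_ne_zero.2 hs) (hlvlk s)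
  obtain ⟨h3, h4⟩ := hbounds s hs
  have hΦpos : (0:ℝ) < Φ s := by linarith
  refine ⟨h1, h3, h4, ?_, Real.log_le_log hΦpos h4⟩
  have := Real.log_le_log (by linarith : (0:ℝ) < lm (lvl s)) h3
  linarith

lemma pwH_nonneg (hlvlk : ∀ s, lvl s ≤ k)
    (hbounds : ∀ s, lvl s ≠ 0 → lm (lvl s) ≤ Φ s ∧ Φ s ≤ lM (lvl s))
    (hm : ∀ j, 1 ≤ j → j ≤ k → 1 ≤ lm j ∧ lm j ≤ lM j)
    (hν : 1 < ν) (s : S) : 0 ≤ pwH Φ lvl lm lM ν s := by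
  unfold pwH
  split
  case isTrue => exact le_rfl
  case isFalse hs =>
    have hS := pwSum_nonneg hm ((Nat.sub_le (lvl s) 1).trans (hlvlk s))
    obtain ⟨_, _, _, h4, _⟩ := pw_facts hlvlk hbounds hm hs
    nlinarith

lemma pwH_le (hlvlk : ∀ s, lvl s ≤ k)
    (hbounds : ∀ s, lvl s ≠ 0 → lm (lvl s) ≤ Φ s ∧ Φ s ≤ lM (lvl s))
    (hm : ∀ j, 1 ≤ j → j ≤ k → 1 ≤ lm j ∧ lm j ≤ lM j)
    (hν : 1 < ν) (s : S) : pwH Φ lvl lm lM ν s ≤ ν * pwSum lM lm k := by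
  have hν0 : (0:ℝ) < ν := by linarith
  unfold pwH
  split
  case isTrue => nlinarith [pwSum_nonneg hm (le_refl k)]
  case isFalse hs =>
    obtain ⟨_, _, _, _, h5⟩ := pw_facts hlvlk hbounds hm hs
    obtain ⟨i, hi⟩ : ∃ i, lvl s = i + 1 := ⟨lvl s - 1, by omega⟩
    have key : pwSum lM lm (lvl s) = pwSum lM lm (lvl s - 1) +
        (Real.log (lM (lvl s)) - Real.log (lm (lvl s)) + 1) := by
      rw [hi]; unfold pwSum
      rw [Finset.sum_Icc_succ_top (by omega : 1 ≤ i + 1)]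
      simp
    have h6 : pwSum lM lm (lvl s) ≤ pwSum lM lm k := pwSum_mono hm (hlvlk s) le_rfl
    nlinarith [key, h6]

lemma pwH_key (_hΦ0 : ∀ s, 0 ≤ Φ s)
    (hopt : ∀ s, lvl s = 0 ↔ Φ s = 0)
    (hlvlk : ∀ s, lvl s ≤ k)
    (hbounds : ∀ s, lvl s ≠ 0 → lm (lvl s) ≤ Φ s ∧ Φ s ≤ lM (lvl s))
    (hm : ∀ j, 1 ≤ j → j ≤ k → 1 ≤ lm j ∧ lm j ≤ lM j)
    (hν : 1 < ν) {s s' : S} (hs : lvl s ≠ 0) (hle : lvl s' ≤ lvl s) :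
    pwH Φ lvl lm lM ν s' ≤ pwH Φ lvl lm lM ν s - ν + ν * (Φ s' / Φ s) := by
  have hν0 : (0:ℝ) < ν := by linarith
  obtain ⟨m1, m2, m3, m4, m5⟩ := pw_facts hlvlk hbounds hm hs
  have hΦs : (0:ℝ) < Φ s := by linarith
  have hSnn := pwSum_nonneg hm ((Nat.sub_le (lvl s) 1).trans (hlvlk s))
  simp only [pwH, if_neg hs]
  by_cases hs' : lvl s' = 0
  · rw [if_pos hs']
    have hΦ' : Φ s' = 0 := (hopt s').1 hs'
    rw [hΦ', zero_div, mul_zero]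
    nlinarith
  · obtain ⟨n1, n2, n3, n4, n5⟩ := pw_facts hlvlk hbounds hm hs'
    have hΦs' : (0:ℝ) < Φ s' := by linarith
    have hdivnn : 0 ≤ Φ s' / Φ s := div_nonneg (le_of_lt hΦs') (le_of_lt hΦs)
    rw [if_neg hs']
    rcases eq_or_lt_of_le hle with heq | hlt
    · rw [heq]
      have hlog : Real.log (Φ s') - Real.log (Φ s) ≤ Φ s' / Φ s - 1 := by
        have h := Real.log_le_sub_one_of_pos (div_pos hΦs' hΦs)
        rwa [Real.log_div (ne_of_gt hΦs') (ne_of_gt hΦs)] at h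
      nlinarith
    · obtain ⟨i, hi⟩ : ∃ i, lvl s' = i + 1 := ⟨lvl s' - 1, by omega⟩
      have key : pwSum lM lm (lvl s') = pwSum lM lm (lvl s' - 1) +
          (Real.log (lM (lvl s')) - Real.log (lm (lvl s')) + 1) := by
        rw [hi]; unfold pwSum
        rw [Finset.sum_Icc_succ_top (by omega : 1 ≤ i + 1)]
        simp
      have hmono : pwSum lM lm (lvl s') ≤ pwSum lM lm (lvl s - 1) :=
        pwSum_mono hm (Nat.le_sub_one_of_lt hlt) ((Nat.sub_le _ _).trans (hlvlk s))
      nlinarith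

end main

/-- Piece-wise polynomial drift, expected time (Lemma `piecewise`): a process on a
search space `S` with a fitness-based `k`-partition (level function `lvl`, levels
never re-entered because fitness `f` never increases), drift function `Φ` taking
values in `{0} ∪ [1,∞)` with `Φ = 0` exactly on the optimum level `0`, level-wise
bounds `lm j ≤ Φ ≤ lM j`, and multiplicative drift `(1 - 1/ν)` whenever `Φ ≥ 1`,
has expected hitting time of the optimum at most
`ν · Σ_{j=1}^{k} (ln lM j - ln lm j + 1)`. -/
theorem stmt15 {Ω S : Type*} {m : MeasurableSpace Ω} (μ : Measure Ω)
    [IsProbabilityMeasure μ] (ℱ : Filtration ℕ m) (X : ℕ → Ω → S)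
    (f Φ : S → ℝ) (k : ℕ) (lvl : S → ℕ) (lm lM : ℕ → ℝ) (ν : ℝ) (hν : 1 < ν)
    (hΦ0 : ∀ s, 0 ≤ Φ s)
    (hval : ∀ s, Φ s = 0 ∨ 1 ≤ Φ s)
    (hopt : ∀ s, lvl s = 0 ↔ Φ s = 0)
    (hlvlk : ∀ s, lvl s ≤ k)
    (hfit : ∀ s s', lvl s < lvl s' → f s < f s')
    (hbounds : ∀ s, lvl s ≠ 0 → lm (lvl s) ≤ Φ s ∧ Φ s ≤ lM (lvl s))
    (hm : ∀ j, 1 ≤ j → j ≤ k → 1 ≤ lm j ∧ lm j ≤ lM j)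
    (hdec : ∀ t ω, f (X (t + 1) ω) ≤ f (X t ω))
    (hint : ∀ t, Integrable (fun ω => Φ (X t ω)) μ)
    (hadapted : ∀ t, StronglyMeasurable[ℱ t] fun ω => Φ (X t ω))
    (hdrift : ∀ t, ∀ᵐ ω ∂μ, 1 ≤ Φ (X t ω) →
      (μ[fun ω' => Φ (X (t + 1) ω') | ℱ t]) ω ≤ (1 - 1 / ν) * Φ (X t ω)) :
    ∑' t : ℕ, μ {ω | ∀ s ≤ t, lvl (X s ω) ≠ 0} ≤
      ENNReal.ofReal
        (ν * ∑ j ∈ Finset.Icc 1 k, (Real.log (lM j) - Real.log (lm j) + 1)) := by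
  classical
  have hν0 : (0:ℝ) < ν := by linarith
  -- levels never increase
  have hlvl_mono : ∀ t ω, lvl (X (t + 1) ω) ≤ lvl (X t ω) := by
    intro t ω
    by_contra h
    exact absurd (hdec t ω) (not_le.2 (hfit _ _ (lt_of_not_ge h)))
  set A : ℕ → Set Ω := fun t => {ω | 1 ≤ Φ (X t ω)} with hA
  have hYm : ∀ t, Measurable fun ω => Φ (X t ω) := fun t =>
    ((hadapted t).measurable).mono (ℱ.le t) le_rfl
  have hAmeas : ∀ t, MeasurableSet (A t) := fun t =>
    measurableSet_le measurable_const (hYm t)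
  set Z : ℕ → Ω → ℝ := fun t ω => if 1 ≤ Φ (X t ω) then (Φ (X t ω))⁻¹ else 0 with hZ
  have hZm : ∀ t, Measurable[ℱ t] (Z t) := fun t =>
    Measurable.ite (measurableSet_le measurable_const (hadapted t).measurable)
      (hadapted t).measurable.inv measurable_const
  have hZ0 : ∀ t ω, 0 ≤ Z t ω := by
    intro t ω
    simp only [hZ]
    split
    · positivity
    · exact le_rfl
  have hZ1 : ∀ t ω, Z t ω ≤ 1 := by
    intro t ω
    simp only [hZ]
    split
    case isTrue h => exact inv_le_one_of_one_le₀ h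
    case isFalse h => exact zero_le_one
  have hZbd : ∀ t, ∃ C, ∀ ω, ‖Z t ω‖ ≤ C := by
    intro t
    exact ⟨1, fun ω => by rw [Real.norm_eq_abs, abs_of_nonneg (hZ0 t ω)]; exact hZ1 t ω⟩
  have hZaesm : ∀ t, AEStronglyMeasurable (Z t) μ := fun t =>
    (((hZm t).mono (ℱ.le t) le_rfl)).aestronglyMeasurable
  -- the product Z_t * Φ(X_{t+1}) and its integral bound
  have hZYint : ∀ t, Integrable (fun ω => Z t ω * Φ (X (t + 1) ω)) μ := fun t =>
    (hint (t + 1)).bdd_mul (hZaesm t) (Filter.Eventually.of_forall (hZbd t).choose_spec)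
  have hIZ : ∀ t, ∫ ω, Z t ω * Φ (X (t + 1) ω) ∂μ ≤ (1 - 1 / ν) * (μ (A t)).toReal := by
    intro t
    haveI : SigmaFinite (μ.trim (ℱ.le t)) := by infer_instance
    have hpull : μ[fun ω => Z t ω * Φ (X (t + 1) ω) | ℱ t]
        =ᵐ[μ] fun ω => Z t ω * (μ[fun ω' => Φ (X (t + 1) ω') | ℱ t]) ω :=
      condExp_mul_of_stronglyMeasurable_left ((hZm t).stronglyMeasurable) (hZYint t) (hint (t + 1))
    have h1 : ∫ ω, Z t ω * Φ (X (t + 1) ω) ∂μ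
        = ∫ ω, Z t ω * (μ[fun ω' => Φ (X (t + 1) ω') | ℱ t]) ω ∂μ := by
      rw [← integral_condExp (ℱ.le t)]
      exact integral_congr_ae hpull
    rw [h1]
    have hInt1 : Integrable (fun ω => Z t ω * (μ[fun ω' => Φ (X (t + 1) ω') | ℱ t]) ω) μ :=
      (integrable_condExp).bdd_mul (hZaesm t) (Filter.Eventually.of_forall (hZbd t).choose_spec)
    have hInt2 : Integrable ((A t).indicator fun _ => (1 - 1 / ν)) μ :=
      (integrable_const _).indicator (hAmeas t)
    have hae : (fun ω => Z t ω * (μ[fun ω' => Φ (X (t + 1) ω') | ℱ t]) ω)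
        ≤ᵐ[μ] (A t).indicator fun _ => (1 - 1 / ν) := by
      filter_upwards [hdrift t] with ω hω
      by_cases h : 1 ≤ Φ (X t ω)
      · have hΦpos : (0:ℝ) < Φ (X t ω) := by linarith
        have hz : Z t ω = (Φ (X t ω))⁻¹ := by simp only [hZ]; rw [if_pos h]
        have := mul_le_mul_of_nonneg_left (hω h) (inv_nonneg.2 (le_of_lt hΦpos))
        rw [Set.indicator_of_mem (show ω ∈ A t from h), hz]
        calc (Φ (X t ω))⁻¹ * (μ[fun ω' => Φ (X (t + 1) ω') | ℱ t]) ω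
            ≤ (Φ (X t ω))⁻¹ * ((1 - 1 / ν) * Φ (X t ω)) := this
          _ = (1 - 1 / ν) * ((Φ (X t ω))⁻¹ * Φ (X t ω)) := by ring
          _ = 1 - 1 / ν := by rw [inv_mul_cancel₀ (ne_of_gt hΦpos), mul_one]
      · have hz : Z t ω = 0 := by simp only [hZ]; rw [if_neg h]
        rw [hz, zero_mul, Set.indicator_of_notMem (show ω ∉ A t from h)]
    calc ∫ ω, Z t ω * (μ[fun ω' => Φ (X (t + 1) ω') | ℱ t]) ω ∂μ
        ≤ ∫ ω, (A t).indicator (fun _ => (1 - 1 / ν)) ω ∂μ := integral_mono_ae hInt1 hInt2 hae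
      _ = (μ (A t)).toReal * (1 - 1 / ν) := by
          rw [integral_indicator_const _ (hAmeas t)]; simp [smul_eq_mul, Measure.real]
      _ = (1 - 1 / ν) * (μ (A t)).toReal := by ring
  -- potential and its lintegral
  set H : ℕ → Ω → ℝ := fun t ω => pwH Φ lvl lm lM ν (X t ω) with hH
  set L : ℕ → ENNReal := fun t => ∫⁻ ω, ENNReal.ofReal (H t ω) ∂μ with hL
  have hHnn : ∀ t ω, 0 ≤ H t ω := fun t ω => pwH_nonneg hlvlk hbounds hm hν _
  have hLB : ∀ t, L t ≤ ENNReal.ofReal (ν * pwSum lM lm k) := by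
    intro t
    calc L t ≤ ∫⁻ _, ENNReal.ofReal (ν * pwSum lM lm k) ∂μ :=
          lintegral_mono fun ω => ENNReal.ofReal_le_ofReal (pwH_le hlvlk hbounds hm hν _)
      _ = ENNReal.ofReal (ν * pwSum lM lm k) := by
          rw [lintegral_const, measure_univ, mul_one]
  have hLfin : ∀ t, L t ≠ ⊤ :=
    fun t => ne_top_of_le_ne_top ENNReal.ofReal_ne_top (hLB t)
  set g : ℕ → Ω → ℝ := fun t ω => ν * (Z t ω * Φ (X (t + 1) ω)) with hg
  have hgnn : ∀ t ω, 0 ≤ g t ω := fun t ω =>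
    mul_nonneg (le_of_lt hν0) (mul_nonneg (hZ0 t ω) (hΦ0 _))
  have hgm : ∀ t, Measurable (g t) := fun t =>
    (((hZm t).mono (ℱ.le t) le_rfl).mul (hYm (t + 1))).const_mul ν
  have hgint : ∀ t, Integrable (g t) μ := fun t => (hZYint t).const_mul ν
  -- pointwise master inequality
  have hpt : ∀ t ω, ENNReal.ofReal (H (t + 1) ω)
      + (A t).indicator (fun _ => ENNReal.ofReal ν) ω
      ≤ ENNReal.ofReal (H t ω) + ENNReal.ofReal (g t ω) := by
    intro t ω
    by_cases h : ω ∈ A t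
    · have h1 : 1 ≤ Φ (X t ω) := h
      have hΦpos : (0:ℝ) < Φ (X t ω) := by linarith
      have hs : lvl (X t ω) ≠ 0 := by
        intro h0
        have := (hopt _).1 h0
        linarith
      have hkey := pwH_key hΦ0 hopt hlvlk hbounds hm hν hs (hlvl_mono t ω)
      have hz : Z t ω = (Φ (X t ω))⁻¹ := by simp only [hZ]; rw [if_pos h1]
      have hgval : g t ω = ν * (Φ (X (t + 1) ω) / Φ (X t ω)) := by
        simp only [hg]; rw [hz, inv_mul_eq_div]
      rw [Set.indicator_of_mem h]
      rw [← ENNReal.ofReal_add (hHnn (t + 1) ω) (le_of_lt hν0),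
        ← ENNReal.ofReal_add (hHnn t ω) (hgnn t ω)]
      apply ENNReal.ofReal_le_ofReal
      rw [hgval]
      simp only [hH] at hkey ⊢
      linarith
    · have h1 : ¬ (1 ≤ Φ (X t ω)) := h
      have hΦ : Φ (X t ω) = 0 := by
        rcases hval (X t ω) with h0 | h2
        · exact h0
        · exact absurd h2 h1
      have hs : lvl (X t ω) = 0 := (hopt _).2 hΦ
      have hs' : lvl (X (t + 1) ω) = 0 := Nat.le_zero.1 (hs ▸ hlvl_mono t ω)
      have hH1 : H (t + 1) ω = 0 := by simp only [hH, pwH, if_pos hs']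
      rw [Set.indicator_of_notMem h, hH1, add_zero, ENNReal.ofReal_zero]
      exact zero_le
  -- one-step decrease of the lintegral
  have hstep : ∀ t, μ (A t) + L (t + 1) ≤ L t := by
    intro t
    have hmain : L (t + 1) + ENNReal.ofReal ν * μ (A t)
        ≤ L t + ENNReal.ofReal (ν - 1) * μ (A t) := by
      have lhs_eq : L (t + 1) + ENNReal.ofReal ν * μ (A t)
          = ∫⁻ ω, (ENNReal.ofReal (H (t + 1) ω)
              + (A t).indicator (fun _ => ENNReal.ofReal ν) ω) ∂μ := by
        rw [lintegral_add_right _ ((measurable_const).indicator (hAmeas t)),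
          lintegral_indicator_const (hAmeas t)]
      have rhs_eq : ∫⁻ ω, (ENNReal.ofReal (H t ω) + ENNReal.ofReal (g t ω)) ∂μ
          = L t + ∫⁻ ω, ENNReal.ofReal (g t ω) ∂μ := by
        rw [lintegral_add_right _ ((hgm t).ennreal_ofReal)]
      have hg_le : ∫⁻ ω, ENNReal.ofReal (g t ω) ∂μ ≤ ENNReal.ofReal (ν - 1) * μ (A t) := by
        rw [← ofReal_integral_eq_lintegral_ofReal (hgint t)
          (Filter.Eventually.of_forall (hgnn t))]
        have : ∫ ω, g t ω ∂μ ≤ (ν - 1) * (μ (A t)).toReal := by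
          have h2 : ∫ ω, g t ω ∂μ = ν * ∫ ω, Z t ω * Φ (X (t + 1) ω) ∂μ := by
            simp only [hg]
            rw [integral_const_mul]
          rw [h2]
          have h3 := mul_le_mul_of_nonneg_left (hIZ t) (le_of_lt hν0)
          calc ν * ∫ ω, Z t ω * Φ (X (t + 1) ω) ∂μ
              ≤ ν * ((1 - 1 / ν) * (μ (A t)).toReal) := h3
            _ = (ν - 1) * (μ (A t)).toReal := by field_simp
        calc ENNReal.ofReal (∫ ω, g t ω ∂μ)
            ≤ ENNReal.ofReal ((ν - 1) * (μ (A t)).toReal) := ENNReal.ofReal_le_ofReal this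
          _ = ENNReal.ofReal (ν - 1) * ENNReal.ofReal ((μ (A t)).toReal) :=
              ENNReal.ofReal_mul (by linarith)
          _ = ENNReal.ofReal (ν - 1) * μ (A t) := by
              rw [ENNReal.ofReal_toReal (measure_ne_top μ _)]
      calc L (t + 1) + ENNReal.ofReal ν * μ (A t)
          = ∫⁻ ω, (ENNReal.ofReal (H (t + 1) ω)
              + (A t).indicator (fun _ => ENNReal.ofReal ν) ω) ∂μ := lhs_eq
        _ ≤ ∫⁻ ω, (ENNReal.ofReal (H t ω) + ENNReal.ofReal (g t ω)) ∂μ :=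
            lintegral_mono fun ω => hpt t ω
        _ = L t + ∫⁻ ω, ENNReal.ofReal (g t ω) ∂μ := rhs_eq
        _ ≤ L t + ENNReal.ofReal (ν - 1) * μ (A t) := add_le_add_right hg_le _
    have hsplit : ENNReal.ofReal ν * μ (A t)
        = μ (A t) + ENNReal.ofReal (ν - 1) * μ (A t) := by
      have : ENNReal.ofReal ν = 1 + ENNReal.ofReal (ν - 1) := by
        have h1 : (1:ℝ) + (ν - 1) = ν := by ring
        rw [← ENNReal.ofReal_one, ← ENNReal.ofReal_add zero_le_one (by linarith), h1]
      rw [this, add_mul, one_mul]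
    rw [hsplit] at hmain
    have hfin : ENNReal.ofReal (ν - 1) * μ (A t) ≠ ⊤ :=
      ENNReal.mul_ne_top ENNReal.ofReal_ne_top (measure_ne_top μ _)
    have hmain' : (L (t + 1) + μ (A t)) + ENNReal.ofReal (ν - 1) * μ (A t)
        ≤ L t + ENNReal.ofReal (ν - 1) * μ (A t) := by
      calc (L (t + 1) + μ (A t)) + ENNReal.ofReal (ν - 1) * μ (A t)
          = L (t + 1) + (μ (A t) + ENNReal.ofReal (ν - 1) * μ (A t)) := by
            rw [add_assoc]
        _ ≤ L t + ENNReal.ofReal (ν - 1) * μ (A t) := hmain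
    have := (ENNReal.add_le_add_iff_right hfin).1 hmain'
    calc μ (A t) + L (t + 1) = L (t + 1) + μ (A t) := add_comm _ _
      _ ≤ L t := this
  -- induction
  have hsum : ∀ n, (∑ t ∈ Finset.range n, μ (A t)) + L n ≤ L 0 := by
    intro n
    induction n with
    | zero => simp
    | succ n ih =>
      rw [Finset.sum_range_succ, add_assoc]
      calc (∑ t ∈ Finset.range n, μ (A t)) + (μ (A n) + L (n + 1))
          ≤ (∑ t ∈ Finset.range n, μ (A t)) + L n := add_le_add_right (hstep n) _
        _ ≤ L 0 := ih
  -- conclusion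
  have hsub : ∀ t : ℕ, {ω | ∀ s ≤ t, lvl (X s ω) ≠ 0} ⊆ A t := by
    intro t ω hω
    have h := hω t le_rfl
    rcases hval (X t ω) with h0 | h1
    · exact absurd ((hopt _).2 h0) h
    · exact h1
  calc ∑' t : ℕ, μ {ω | ∀ s ≤ t, lvl (X s ω) ≠ 0}
      ≤ ∑' t : ℕ, μ (A t) := ENNReal.tsum_le_tsum fun t => measure_mono (hsub t)
    _ = ⨆ n, ∑ t ∈ Finset.range n, μ (A t) := ENNReal.tsum_eq_iSup_nat
    _ ≤ L 0 := iSup_le fun n => le_trans le_self_add (hsum n)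
    _ ≤ ENNReal.ofReal (ν * pwSum lM lm k) := hLB 0
    _ = ENNReal.ofReal
        (ν * ∑ j ∈ Finset.Icc 1 k, (Real.log (lM j) - Real.log (lm j) + 1)) := rfl
end

section
/- Under the hypotheses of the piece-wise drift lemma (fitness-based k-partition, multiplicative drift with parameter ν > 1), for any λ > 0 the probability that the total hitting time of the optimum exceeds Σ_{j=1}^{k} ⌈ν(ln(M̄_j/m_j) + λ)⌉ is at most k·exp(-λ). -/
open MeasureTheory

lemma drift_chain {Ω : Type*} {m : MeasurableSpace Ω} (μ : Measure Ω)
    [IsProbabilityMeasure μ] (ℱ : Filtration ℕ m) (g : ℕ → Ω → ℝ)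
    (hg0 : ∀ t ω, 0 ≤ g t ω)
    (hint : ∀ t, Integrable (g t) μ) (hadapted : ∀ t, StronglyMeasurable[ℱ t] (g t))
    (c : ℝ) (hc : 0 ≤ c)
    (hdrift : ∀ t, ∀ᵐ ω ∂μ, 1 ≤ g t ω → (μ[g (t + 1) | ℱ t]) ω ≤ c * g t ω)
    (a n : ℕ) (lo hi : ℝ) (hlo : 1 ≤ lo) (hhi : 0 ≤ hi) :
    μ {ω | ∀ s ≤ n, g (a + s) ω ∈ Set.Icc lo hi} ≤
      ENNReal.ofReal (c ^ n * hi / lo) := by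
  set B : ℕ → Set Ω := fun r => {ω | ∀ s ≤ r, g (a + s) ω ∈ Set.Icc lo hi} with hB
  have hBmeas : ∀ r, MeasurableSet[ℱ (a + r)] (B r) := by
    intro r
    have : B r = ⋂ s ∈ Set.Iic r, (fun ω => g (a + s) ω) ⁻¹' Set.Icc lo hi := by
      ext ω; simp [hB, Set.mem_iInter]
    rw [this]
    exact MeasurableSet.biInter (Set.to_countable _) fun s hs =>
      (((hadapted (a + s)).mono (ℱ.mono (Nat.add_le_add_left (Set.mem_Iic.1 hs) a))).measurable measurableSet_Icc)
  have hBmeas' : ∀ r, MeasurableSet (B r) := fun r => ℱ.le (a + r) _ (hBmeas r)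
  have hBsub : ∀ r, B (r + 1) ⊆ B r := fun r ω hω s hs => hω s (hs.trans (Nat.le_succ r))
  set Y : ℕ → ℝ := fun r => ∫ ω in B r, g (a + r) ω ∂μ with hY
  have hstep : ∀ r, Y (r + 1) ≤ c * Y r := by
    intro r
    have hadd : a + (r + 1) = (a + r) + 1 := by omega
    have h1 : Y (r + 1) ≤ ∫ ω in B r, g ((a + r) + 1) ω ∂μ := by
      rw [hY]; simp only [hadd]
      exact setIntegral_mono_set (hint _).integrableOn
        (Filter.Eventually.of_forall fun ω => hg0 _ ω)
        (HasSubset.Subset.eventuallyLE (hBsub r))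
    have h2 : ∫ ω in B r, g ((a + r) + 1) ω ∂μ
        = ∫ ω in B r, (μ[g ((a + r) + 1) | ℱ (a + r)]) ω ∂μ :=
      (setIntegral_condExp (ℱ.le (a + r)) (hint _) (hBmeas r)).symm
    have h3 : ∫ ω in B r, (μ[g ((a + r) + 1) | ℱ (a + r)]) ω ∂μ
        ≤ ∫ ω in B r, c * g (a + r) ω ∂μ := by
      refine setIntegral_mono_ae_restrict integrable_condExp.integrableOn
        (((hint (a + r)).const_mul c).integrableOn) ?_
      rw [Filter.EventuallyLE, ae_restrict_iff' (hBmeas' r)]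
      filter_upwards [hdrift (a + r)] with ω h hω
      exact h (hlo.trans (hω r le_rfl).1)
    have h4 : ∫ ω in B r, c * g (a + r) ω ∂μ = c * Y r := by
      rw [hY]; exact integral_const_mul c _
    linarith
  have hbase : Y 0 ≤ hi := by
    have h1 : Y 0 ≤ ∫ _ω in B 0, hi ∂μ := by
      refine setIntegral_mono_on (hint _).integrableOn
        integrableOn_const (hBmeas' 0) ?_
      intro ω hω; exact (hω 0 le_rfl).2
    have h2 : ∫ _ω in B 0, hi ∂μ = (μ (B 0)).toReal * hi := by
      rw [setIntegral_const, smul_eq_mul]; rfl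
    have h3 : (μ (B 0)).toReal ≤ 1 :=
      ENNReal.toReal_le_of_le_ofReal zero_le_one (by simpa using prob_le_one (μ := μ) (s := B 0))
    nlinarith
  have hYn : Y n ≤ c ^ n * hi := by
    induction n with
    | zero => simpa using hbase
    | succ r ih =>
      calc Y (r + 1) ≤ c * Y r := hstep r
        _ ≤ c * (c ^ r * hi) := mul_le_mul_of_nonneg_left ih hc
        _ = c ^ (r + 1) * hi := by ring
  have h5 : (μ (B n)).toReal * lo ≤ Y n := by
    have h2 : (μ (B n)).toReal * lo = ∫ _ω in B n, lo ∂μ := by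
      rw [setIntegral_const, smul_eq_mul]; rfl
    rw [h2]
    exact setIntegral_mono_on integrableOn_const
      (hint _).integrableOn (hBmeas' n) (fun ω hω => (hω n le_rfl).1)
  have hlo0 : (0:ℝ) < lo := lt_of_lt_of_le one_pos hlo
  have h6 : (μ (B n)).toReal ≤ c ^ n * hi / lo := by
    rw [le_div_iff₀ hlo0]; linarith
  calc μ (B n) = ENNReal.ofReal ((μ (B n)).toReal) :=
        (ENNReal.ofReal_toReal (measure_ne_top μ _)).symm
    _ ≤ ENNReal.ofReal (c ^ n * hi / lo) := ENNReal.ofReal_le_ofReal h6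

lemma drift_numeric {lm lM ν lam : ℝ} (hν : 1 < ν) (h1 : 1 ≤ lm) (h2 : lm ≤ lM)
    (hlam : 0 < lam) :
    (1 - 1 / ν) ^ ⌈ν * (Real.log (lM / lm) + lam)⌉₊ * lM / lm ≤ Real.exp (-lam) := by
  set n : ℕ := ⌈ν * (Real.log (lM / lm) + lam)⌉₊ with hn
  have hν0 : (0:ℝ) < ν := lt_trans one_pos hν
  have hlm0 : (0:ℝ) < lm := lt_of_lt_of_le one_pos h1
  have hlM0 : (0:ℝ) < lM := lt_of_lt_of_le hlm0 h2
  have hc0 : (0:ℝ) ≤ 1 - 1 / ν := by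
    have : 1 / ν ≤ 1 := by rw [div_le_one hν0]; linarith
    linarith
  have hce : 1 - 1 / ν ≤ Real.exp (-(1 / ν)) := by
    have := Real.add_one_le_exp (-(1 / ν)); linarith
  have hpow : (1 - 1 / ν) ^ n ≤ Real.exp (-((n : ℝ) / ν)) := by
    calc (1 - 1 / ν) ^ n ≤ Real.exp (-(1 / ν)) ^ n := pow_le_pow_left₀ hc0 hce n
      _ = Real.exp ((n : ℝ) * (-(1 / ν))) := (Real.exp_nat_mul _ n).symm
      _ = Real.exp (-((n : ℝ) / ν)) := by ring_nf
  have hceil : ν * (Real.log (lM / lm) + lam) ≤ (n : ℝ) := Nat.le_ceil _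
  have h4 : Real.log (lM / lm) + lam ≤ (n : ℝ) / ν := by
    rw [le_div_iff₀ hν0]; linarith [hceil, mul_comm ν (Real.log (lM / lm) + lam)]
  have h5 : Real.exp (-((n : ℝ) / ν)) ≤ Real.exp (-(Real.log (lM / lm) + lam)) :=
    Real.exp_le_exp.2 (by linarith)
  have hR : Real.exp (Real.log (lM / lm)) = lM / lm := Real.exp_log (by positivity)
  have h6 : Real.exp (-(Real.log (lM / lm) + lam)) = (lm / lM) * Real.exp (-lam) := by
    rw [neg_add, Real.exp_add, Real.exp_neg, hR]
    field_simp
  have h7 : (1 - 1 / ν) ^ n ≤ (lm / lM) * Real.exp (-lam) := by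
    calc (1 - 1 / ν) ^ n ≤ Real.exp (-((n : ℝ) / ν)) := hpow
      _ ≤ Real.exp (-(Real.log (lM / lm) + lam)) := h5
      _ = (lm / lM) * Real.exp (-lam) := h6
  rw [div_le_iff₀ hlm0]
  calc (1 - 1 / ν) ^ n * lM ≤ ((lm / lM) * Real.exp (-lam)) * lM :=
        mul_le_mul_of_nonneg_right h7 (le_of_lt hlM0)
    _ = Real.exp (-lam) * lm := by field_simp

/-- Piece-wise polynomial drift, tail bound: under the hypotheses of the piece-wise
drift lemma (fitness-based `k`-partition, multiplicative drift with parameter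
`ν > 1`), for any `λ > 0` the probability that the hitting time of the optimum
exceeds `Σ_{j=1}^{k} ⌈ν (ln(lM j / lm j) + λ)⌉` is at most `k · exp(-λ)`. -/
theorem stmt16 {Ω S : Type*} {m : MeasurableSpace Ω} (μ : Measure Ω)
    [IsProbabilityMeasure μ] (ℱ : Filtration ℕ m) (X : ℕ → Ω → S)
    (f Φ : S → ℝ) (k : ℕ) (lvl : S → ℕ) (lm lM : ℕ → ℝ) (ν : ℝ) (hν : 1 < ν)
    (hΦ0 : ∀ s, 0 ≤ Φ s)
    (hval : ∀ s, Φ s = 0 ∨ 1 ≤ Φ s)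
    (hopt : ∀ s, lvl s = 0 ↔ Φ s = 0)
    (hlvlk : ∀ s, lvl s ≤ k)
    (hfit : ∀ s s', lvl s < lvl s' → f s < f s')
    (hbounds : ∀ s, lvl s ≠ 0 → lm (lvl s) ≤ Φ s ∧ Φ s ≤ lM (lvl s))
    (hm : ∀ j, 1 ≤ j → j ≤ k → 1 ≤ lm j ∧ lm j ≤ lM j)
    (hdec : ∀ t ω, f (X (t + 1) ω) ≤ f (X t ω))
    (hint : ∀ t, Integrable (fun ω => Φ (X t ω)) μ)
    (hadapted : ∀ t, StronglyMeasurable[ℱ t] fun ω => Φ (X t ω))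
    (hdrift : ∀ t, ∀ᵐ ω ∂μ, 1 ≤ Φ (X t ω) →
      (μ[fun ω' => Φ (X (t + 1) ω') | ℱ t]) ω ≤ (1 - 1 / ν) * Φ (X t ω))
    (lam : ℝ) (hlam : 0 < lam) :
    μ {ω | ∀ t ≤ ∑ j ∈ Finset.Icc 1 k, ⌈ν * (Real.log (lM j / lm j) + lam)⌉₊,
        lvl (X t ω) ≠ 0} ≤
      (k : ENNReal) * ENNReal.ofReal (Real.exp (-lam)) := by
  classical
  set T : ℕ → ℕ := fun j => ⌈ν * (Real.log (lM j / lm j) + lam)⌉₊ with hT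
  set cp : ℕ → ℕ := fun j => ∑ i ∈ Finset.Icc (j + 1) k, T i with hcp
  set B : ℕ → Set Ω := fun j =>
    {ω | ∀ s ≤ T j, Φ (X (cp j + s) ω) ∈ Set.Icc (lm j) (lM j)} with hBdef
  -- checkpoint recursion
  have hcpstep : ∀ j, 1 ≤ j → j ≤ k → cp (j - 1) = cp j + T j := by
    intro j hj1 hjk
    have h1 : (j - 1) + 1 = j := by omega
    have h2 : Finset.Icc j k = Finset.cons j (Finset.Ioc j k) (by simp) :=
      Finset.Icc_eq_cons_Ioc hjk
    have h3 : Finset.Ioc j k = Finset.Icc (j + 1) k := by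
      ext x; simp only [Finset.mem_Ioc, Finset.mem_Icc]; omega
    rw [hcp]
    simp only [h1]
    rw [h2, Finset.sum_cons, h3, add_comm]
  -- levels are nonincreasing in time
  have hmono : ∀ ω, Antitone fun t => lvl (X t ω) := by
    intro ω
    refine antitone_nat_of_succ_le fun t => ?_
    by_contra h
    push_neg at h
    exact absurd (hdec t ω) (not_le.2 (hfit _ _ h))
  -- covering
  have hcover : {ω | ∀ t ≤ ∑ j ∈ Finset.Icc 1 k, T j, lvl (X t ω) ≠ 0} ⊆
      ⋃ j ∈ Finset.Icc 1 k, B j := by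
    intro ω hω
    have hcp0 : cp 0 = ∑ j ∈ Finset.Icc 1 k, T j := by rw [hcp]
    have hPk : lvl (X (cp k) ω) ≤ k := hlvlk _
    have hex : ∃ j, lvl (X (cp j) ω) ≤ j := ⟨k, hPk⟩
    set j0 : ℕ := Nat.find hex with hj0
    have hP : lvl (X (cp j0) ω) ≤ j0 := Nat.find_spec hex
    have hj0k : j0 ≤ k := Nat.find_min' hex hPk
    have hj0pos : 1 ≤ j0 := by
      rcases Nat.eq_zero_or_pos j0 with h0 | h1
      · exfalso
        have := hω (cp 0) (le_of_eq hcp0)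
        rw [h0] at hP
        omega
      · exact h1
    have hnotP : ¬ lvl (X (cp (j0 - 1)) ω) ≤ j0 - 1 :=
      Nat.find_min hex (by omega)
    have hge : j0 ≤ lvl (X (cp (j0 - 1)) ω) := by omega
    have hrec : cp (j0 - 1) = cp j0 + T j0 := hcpstep j0 hj0pos hj0k
    have hmem : ω ∈ B j0 := by
      intro s hs
      have hub : lvl (X (cp j0 + s) ω) ≤ j0 :=
        le_trans (hmono ω (Nat.le_add_right (cp j0) s)) hP
      have hlb : j0 ≤ lvl (X (cp j0 + s) ω) := by
        refine le_trans ?_ (hmono ω (Nat.add_le_add_left hs (cp j0)))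
        rw [← hrec]; exact hge
      have heq : lvl (X (cp j0 + s) ω) = j0 := le_antisymm hub hlb
      have hne : lvl (X (cp j0 + s) ω) ≠ 0 := by omega
      have := hbounds _ hne
      rw [heq] at this
      exact this
    exact Set.mem_biUnion (Finset.mem_Icc.2 ⟨hj0pos, hj0k⟩) hmem
  -- per-level bound
  have hone : ∀ j, 1 ≤ j → j ≤ k → μ (B j) ≤ ENNReal.ofReal (Real.exp (-lam)) := by
    intro j hj1 hjk
    obtain ⟨hmj, hMj⟩ := hm j hj1 hjk
    have hc0 : (0:ℝ) ≤ 1 - 1 / ν := by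
      have hν0 : (0:ℝ) < ν := lt_trans one_pos hν
      have : 1 / ν ≤ 1 := by rw [div_le_one hν0]; linarith
      linarith
    have hchain := drift_chain μ ℱ (fun t ω => Φ (X t ω)) (fun t ω => hΦ0 _)
      hint hadapted (1 - 1 / ν) hc0 hdrift (cp j) (T j) (lm j) (lM j) hmj
      (le_trans (le_trans zero_le_one hmj) hMj)
    refine le_trans hchain (ENNReal.ofReal_le_ofReal ?_)
    exact drift_numeric hν hmj hMj hlam
  -- combine
  calc μ {ω | ∀ t ≤ ∑ j ∈ Finset.Icc 1 k, T j, lvl (X t ω) ≠ 0}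
      ≤ μ (⋃ j ∈ Finset.Icc 1 k, B j) := measure_mono hcover
    _ ≤ ∑ j ∈ Finset.Icc 1 k, μ (B j) := measure_biUnion_finset_le _ _
    _ ≤ ∑ j ∈ Finset.Icc 1 k, ENNReal.ofReal (Real.exp (-lam)) :=
        Finset.sum_le_sum fun j hj => hone j (Finset.mem_Icc.1 hj).1 (Finset.mem_Icc.1 hj).2
    _ = (Finset.Icc 1 k).card • ENNReal.ofReal (Real.exp (-lam)) := by
        rw [Finset.sum_const]
    _ = (k : ENNReal) * ENNReal.ofReal (Real.exp (-lam)) := by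
        rw [Nat.card_Icc]; simp [nsmul_eq_mul]
end
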